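/- arXiv:1410.1653 — 6 statements merged into one kernel-verified Lean document; each statement's English description precedes it below -/
import Mathlib

section
/- In any good orientation of a dual-critical graph, the resulting digraph is rooted connected with the source as root; that is, there is a directed path from the source to every other vertex. -/
variable {V : Type*}

/-- An orientation of a simple graph: a relation choosing a direction for each edge. -/
def IsOrientation (G : SimpleGraph V) (r : V → V → Prop) : Prop :=
  (∀ u v, G.Adj u v ↔ (r u v ∨ r v u)) ∧ ∀ u v, r u v → ¬ r v u

/-- A relation is acyclic if it has no directed cycle. -/
def AcyclicRel (r : V → V → Prop) : Prop := ∀ v, ¬ Relation.TransGen r v v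

/-- Indegree of a vertex in an orientation. -/
noncomputable def inDeg (r : V → V → Prop) (v : V) : ℕ := {u | r u v}.ncard

/-- Dual-critical: there is an acyclic orientation in which all vertices except one
have odd indegree. -/
def DualCritical (G : SimpleGraph V) : Prop :=
  ∃ r : V → V → Prop, IsOrientation G r ∧ AcyclicRel r ∧
    ∃ s : V, ∀ v : V, v ≠ s → Odd (inDeg r v)

/-- Dual-critical via a good ordering: an enumeration of all vertices such that every
vertex except the first has an odd number of neighbours among its predecessors. -/
def DualCriticalOrd (G : SimpleGraph V) : Prop :=
  ∃ (n : ℕ) (e : Fin n ≃ V), ∀ i : Fin n, 0 < i.val →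
    Odd ({j : Fin n | j < i ∧ G.Adj (e j) (e i)}.ncard)

/-- Number of edges between two (disjoint) vertex sets. -/
noncomputable def cut (G : SimpleGraph V) (A B : Set V) : ℕ :=
  {p : V × V | p.1 ∈ A ∧ p.2 ∈ B ∧ G.Adj p.1 p.2}.ncard

/-- A good `k`-partition: an ordered partition into nonempty classes such that each class
after the first is joined to the union of the previous ones by an odd number of edges. -/
def GoodPartition (G : SimpleGraph V) {k : ℕ} (P : Fin k → Set V) : Prop :=
  (∀ i, (P i).Nonempty) ∧ Pairwise (Function.onFun Disjoint P) ∧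
  (⋃ i, P i) = Set.univ ∧
  ∀ i : Fin k, 0 < i.val → Odd (cut G (⋃ j ∈ {j : Fin k | j < i}, P j) (P i))

def KDualCritical (G : SimpleGraph V) (k : ℕ) : Prop :=
  ∃ P : Fin k → Set V, GoodPartition G P

noncomputable def maxdc (G : SimpleGraph V) : ℕ := sSup {k | KDualCritical G k}

/-- A `T`-odd orientation: vertices in `T` have odd indegree, others even. -/
def TOdd (r : V → V → Prop) (T : Set V) : Prop :=
  ∀ v, (v ∈ T → Odd (inDeg r v)) ∧ (v ∉ T → Even (inDeg r v))

/-- Super-dual-critical: deleting any vertex leaves a dual-critical graph. -/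
def SuperDualCritical (G : SimpleGraph V) : Prop :=
  ∀ v : V, DualCriticalOrd (G.induce ({v}ᶜ : Set V))

theorem AcyclicRel.wellFounded [Finite V] {r : V → V → Prop} (h : AcyclicRel r) :
    WellFounded r :=
  have : IsTrans V (Relation.TransGen r) := ⟨fun _ _ _ => Relation.TransGen.trans⟩
  have : Std.Irrefl (Relation.TransGen r) := ⟨h⟩
  Subrelation.wf Relation.TransGen.single (Finite.wellFounded_of_trans_of_irrefl _)

theorem exists_rel_of_odd_inDeg {r : V → V → Prop} {v : V} (h : Odd (inDeg r v)) :
    ∃ u, r u v :=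
  Set.nonempty_of_ncard_ne_zero (s := {u | r u v}) fun h0 => by rw [inDeg, h0] at h; simp at h

theorem WellFounded.reflTransGen_of_exists_rel {r : V → V → Prop} (hwf : WellFounded r) {s : V}
    (hpred : ∀ v, v ≠ s → ∃ u, r u v) (v : V) : Relation.ReflTransGen r s v := by
  induction v using hwf.induction with
  | _ v ih =>
    by_cases hv : v = s
    · exact hv ▸ .refl
    · obtain ⟨u, hu⟩ := hpred v hv
      exact (ih u hu).tail hu

theorem stmt2_general [Fintype V] (r : V → V → Prop)
    (hac : AcyclicRel r) (s : V)
    (hodd : ∀ v : V, v ≠ s → Odd (inDeg r v)) :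
    ∀ v : V, Relation.ReflTransGen r s v :=
  hac.wellFounded.reflTransGen_of_exists_rel fun v hv => exists_rel_of_odd_inDeg (hodd v hv)

theorem stmt2 [Fintype V] (G : SimpleGraph V) (r : V → V → Prop)
    (hor : IsOrientation G r) (hac : AcyclicRel r) (s : V)
    (hsource : inDeg r s = 0) (hodd : ∀ v : V, v ≠ s → Odd (inDeg r v)) :
    ∀ v : V, Relation.ReflTransGen r s v :=
  stmt2_general r hac s hodd
end

section
/- If a graph G is dual-critical, then for every vertex v of G there is an acyclic orientation in which all vertices except v have odd indegree. -/
/-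
Take an acyclic orientation witnessing dual-criticality and list the vertices so that every edge
points towards the endpoint nearer the head; the source `s` comes last and every other vertex has
odd indegree. Induction along such a list shows that every parity pattern `c : V → ZMod 2` with
`∑ c = n - 1` is the indegree pattern of an acyclic orientation. Remove the head `u`, a sink with
an odd number of neighbours. If `c u = 1`, keep `u` as a sink. If `c u = 0`, put `u` at the other
end, as a source: this adds one to the indegree of each of its neighbours, so the pattern asked of
the rest is `c` plus the indicator of the neighbourhood of `u`, whose total changes by an odd
number and stays admissible. The theorem is the pattern that is `1` everywhere except at `v`.
-/

variable {V : Type*}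

theorem List.sum_map_boole {α R : Type*} [AddMonoidWithOne R] (p : α → Prop) [DecidablePred p]
    (l : List α) : (l.map fun x => if p x then (1 : R) else 0).sum = l.countP (p ·) := by
  induction l with
  | nil => simp
  | cons x l ih => by_cases hx : p x <;> simp [hx, ih, add_comm]

lemma IsOrientation.le_of_le_of_le {G : SimpleGraph V} {r r' R : V → V → Prop} [Std.Antisymm R]
    (hr : IsOrientation G r) (hr' : IsOrientation G r') (h : r ≤ R) (h' : r' ≤ R) :
    r ≤ r' := by
  intro a b hab
  have hadj : G.Adj a b := (hr.1 a b).2 (.inl hab)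
  refine ((hr'.1 a b).1 hadj).resolve_right fun hba => hadj.ne ?_
  exact Std.Antisymm.antisymm a b (h a b hab) (h' b a hba)

lemma IsOrientation.eq_of_le_of_le {G : SimpleGraph V} {r r' R : V → V → Prop} [Std.Antisymm R]
    (hr : IsOrientation G r) (hr' : IsOrientation G r') (h : r ≤ R) (h' : r' ≤ R) :
    r = r' :=
  le_antisymm (hr.le_of_le_of_le hr' h h') (hr'.le_of_le_of_le hr h' h)

lemma AcyclicRel.of_map_lt {α : Type*} [Preorder α] {r : V → V → Prop} (f : V → α)
    (h : ∀ a b, r a b → f b < f a) : AcyclicRel r := fun v hv => by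
  have hlt := Relation.TransGen.lift (p := (· > ·)) f h v v hv
  rw [Relation.transGen_eq_self] at hlt
  exact lt_irrefl _ hlt

lemma AcyclicRel.isPartialOrder_reflTransGen {r : V → V → Prop} (hr : AcyclicRel r) :
    IsPartialOrder V (Relation.ReflTransGen r) where
  refl _ := .refl
  trans _ _ _ := Relation.ReflTransGen.trans
  antisymm a b hab hba := by
    rcases Relation.reflTransGen_iff_eq_or_transGen.1 hab with rfl | hab
    · rfl
    rcases Relation.reflTransGen_iff_eq_or_transGen.1 hba with rfl | hba
    · rfl
    exact (hr a (hab.trans hba)).elim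

/-- The orientation of `G` along the list `l`: each edge between two entries of `l` points
towards the one nearer the head, so the head is a sink. -/
def listOrient (G : SimpleGraph V) : List V → V → V → Prop
  | [] => fun _ _ => False
  | x :: xs => fun a b => (b = x ∧ a ∈ xs ∧ G.Adj a b) ∨ listOrient G xs a b

section listOrient

variable {G : SimpleGraph V} {l xs : List V} {a b x u : V}

lemma listOrient_adj (h : listOrient G l a b) : G.Adj a b := by
  induction l with
  | nil => exact h.elim
  | cons y l ih => exact h.elim (fun h => h.2.2) ih

lemma listOrient_mem (h : listOrient G l a b) : a ∈ l ∧ b ∈ l := by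
  induction l with
  | nil => exact h.elim
  | cons y l ih =>
    rcases h with ⟨rfl, ha, -⟩ | h
    · exact ⟨.tail _ ha, .head _⟩
    · exact ⟨.tail _ (ih h).1, .tail _ (ih h).2⟩

lemma listOrient_or_listOrient (ha : a ∈ l) (hb : b ∈ l) (hab : G.Adj a b) :
    listOrient G l a b ∨ listOrient G l b a := by
  induction l with
  | nil => simp at ha
  | cons y l ih =>
    rcases List.mem_cons.1 ha with rfl | ha' <;> rcases List.mem_cons.1 hb with rfl | hb'
    · exact (hab.ne rfl).elim
    · exact .inr (.inl ⟨rfl, hb', hab.symm⟩)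
    · exact .inl (.inl ⟨rfl, ha', hab⟩)
    · exact (ih ha' hb').imp .inr .inr

lemma List.Pairwise.rel_of_listOrient {t : V → V → Prop} (hl : l.Pairwise t)
    (h : listOrient G l a b) : t b a := by
  induction l with
  | nil => exact h.elim
  | cons y l ih =>
    rcases h with ⟨rfl, ha, -⟩ | h
    · exact List.rel_of_pairwise_cons hl ha
    · exact ih hl.of_cons h

lemma idxOf_lt_of_listOrient [DecidableEq V] (hl : l.Nodup) (h : listOrient G l a b) :
    l.idxOf b < l.idxOf a := by
  induction l with
  | nil => exact h.elim
  | cons y l ih =>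
    have hy := (List.nodup_cons.1 hl).1
    rcases h with ⟨rfl, ha, -⟩ | h
    · rw [List.idxOf_cons_self, List.idxOf_cons_ne _ (ne_of_mem_of_not_mem ha hy).symm]
      exact Nat.succ_pos _
    · obtain ⟨ha, hb⟩ := listOrient_mem h
      rw [List.idxOf_cons_ne _ (ne_of_mem_of_not_mem ha hy).symm,
        List.idxOf_cons_ne _ (ne_of_mem_of_not_mem hb hy).symm]
      exact Nat.succ_lt_succ (ih (List.nodup_cons.1 hl).2 h)

lemma listOrient_acyclic (hl : l.Nodup) : AcyclicRel (listOrient G l) := by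
  classical
  exact .of_map_lt l.idxOf fun _ _ => idxOf_lt_of_listOrient hl

lemma isOrientation_listOrient (hl : l.Nodup) (hmem : ∀ a, a ∈ l) :
    IsOrientation G (listOrient G l) := by
  refine ⟨fun a b => ⟨listOrient_or_listOrient (hmem a) (hmem b), ?_⟩,
    fun a b hab hba => ?_⟩
  · rintro (h | h)
    exacts [listOrient_adj h, (listOrient_adj h).symm]
  · classical
    exact (idxOf_lt_of_listOrient hl hab).asymm (idxOf_lt_of_listOrient hl hba)

lemma inDeg_listOrient_cons_self [DecidableRel G.Adj] (hl : (x :: xs).Nodup) :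
    inDeg (listOrient G (x :: xs)) x = xs.countP (G.Adj x ·) := by
  classical
  have hset : {a | listOrient G (x :: xs) a x} = ↑(xs.filter (G.Adj x ·)).toFinset := by
    ext a
    simp only [listOrient, Set.mem_ofPred_eq, true_and, List.coe_toFinset, List.mem_filter,
      decide_eq_true_eq, G.adj_comm x]
    exact or_iff_left fun h => (List.nodup_cons.1 hl).1 (listOrient_mem h).2
  rw [inDeg, hset, Set.ncard_coe_finset, List.toFinset_card_of_nodup
    ((List.nodup_cons.1 hl).2.filter _), List.countP_eq_length_filter]

lemma inDeg_listOrient_cons_of_ne (h : u ≠ x) :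
    inDeg (listOrient G (x :: xs)) u = inDeg (listOrient G xs) u := by
  simp [inDeg, listOrient, h]

lemma inDeg_listOrient_append_singleton_self (hu : u ∉ l) :
    inDeg (listOrient G (l ++ [u])) u = 0 := by
  induction l with
  | nil => simp [inDeg, listOrient]
  | cons y l ih =>
    rw [List.cons_append, inDeg_listOrient_cons_of_ne (List.ne_of_not_mem_cons hu)]
    exact ih (List.not_mem_of_not_mem_cons hu)

lemma inDeg_listOrient_append_singleton_of_mem [DecidableRel G.Adj] (hl : (l ++ [u]).Nodup)
    (hx : x ∈ l) : inDeg (listOrient G (l ++ [u])) x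
      = inDeg (listOrient G l) x + if G.Adj u x then 1 else 0 := by
  induction l with
  | nil => simp at hx
  | cons y l ih =>
    rw [List.cons_append] at hl ⊢
    rcases eq_or_ne x y with rfl | hxy
    · rw [inDeg_listOrient_cons_self hl, inDeg_listOrient_cons_self (hl.sublist (by simp)),
        List.countP_append]
      simp [G.adj_comm]
    · rw [inDeg_listOrient_cons_of_ne hxy, inDeg_listOrient_cons_of_ne hxy]
      exact ih (List.nodup_cons.1 hl).2 ((List.mem_cons.1 hx).resolve_left hxy)

lemma cast_inDeg_listOrient_cons [DecidableRel G.Adj] {c : V → ZMod 2} (hl : (u :: l).Nodup)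
    (hcu : c u = l.countP (G.Adj u ·))
    (h : ∀ x ∈ l, (inDeg (listOrient G l) x : ZMod 2) = c x) :
    ∀ x ∈ u :: l, (inDeg (listOrient G (u :: l)) x : ZMod 2) = c x := by
  intro x hx
  rcases eq_or_ne x u with rfl | hxu
  · rw [inDeg_listOrient_cons_self hl, hcu]
  · rw [inDeg_listOrient_cons_of_ne hxu]
    exact h x ((List.mem_cons.1 hx).resolve_left hxu)

lemma cast_inDeg_listOrient_append_singleton [DecidableRel G.Adj] {c : V → ZMod 2}
    (hl : (l ++ [u]).Nodup) (hcu : c u = 0)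
    (h : ∀ x ∈ l, (inDeg (listOrient G l) x : ZMod 2) = c x + if G.Adj u x then 1 else 0) :
    ∀ x ∈ l ++ [u], (inDeg (listOrient G (l ++ [u])) x : ZMod 2) = c x := by
  intro x hx
  rcases List.mem_append.1 hx with hx | hx
  · rw [inDeg_listOrient_append_singleton_of_mem hl hx, Nat.cast_add, h x hx, Nat.cast_ite,
      Nat.cast_one, Nat.cast_zero, add_assoc, CharTwo.add_self_eq_zero, add_zero]
  · rw [List.mem_singleton.1 hx, hcu,
      inDeg_listOrient_append_singleton_self ((List.nodup_concat l u).1 (by simpa using hl)).1,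
      Nat.cast_zero]

end listOrient

theorem exists_perm_inDeg_listOrient_eq (G : SimpleGraph V) (s : V) {l : List V}
    (hl : (l ++ [s]).Nodup) (hodd : ∀ x ∈ l, Odd (inDeg (listOrient G (l ++ [s])) x))
    (c : V → ZMod 2) (hc : ((l ++ [s]).map c).sum = l.length) :
    ∃ l', l'.Perm (l ++ [s]) ∧ ∀ x ∈ l', (inDeg (listOrient G l') x : ZMod 2) = c x := by
  classical
  induction l generalizing c with
  | nil =>
    refine ⟨[s], .refl _, fun x hx => ?_⟩
    simpa [List.mem_singleton.1 hx, inDeg, listOrient] using hc.symm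
  | cons u l ih =>
    rw [List.cons_append] at hl hodd hc
    have hu : u ∉ l ++ [s] := (List.nodup_cons.1 hl).1
    have hodd_u : ((l ++ [s]).countP (G.Adj u ·) : ZMod 2) = 1 := by
      rw [ZMod.natCast_eq_one_iff_odd, ← inDeg_listOrient_cons_self hl]
      exact hodd u (List.mem_cons_self ..)
    have hodd_l : ∀ x ∈ l, Odd (inDeg (listOrient G (l ++ [s])) x) := fun x hx => by
      have hxu : x ≠ u := ne_of_mem_of_not_mem (List.mem_append_left _ hx) hu
      simpa [inDeg_listOrient_cons_of_ne hxu] using hodd x (List.mem_cons_of_mem _ hx)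
    simp only [List.map_cons, List.sum_cons, List.length_cons, Nat.cast_succ] at hc
    rcases (by decide : ∀ a : ZMod 2, a = 0 ∨ a = 1) (c u) with hcu | hcu
    · have hc' : ((l ++ [s]).map fun x => c x + if G.Adj u x then 1 else 0).sum = l.length := by
        rw [List.sum_map_add, List.sum_map_boole, hodd_u]
        linear_combination (norm := ring_nf) hc - hcu
        reduce_mod_char
      obtain ⟨l', hperm, hl'⟩ := ih hl.of_cons hodd_l _ hc'
      have hperm' := (List.perm_append_singleton u l').trans (hperm.cons u)
      exact ⟨l' ++ [u], hperm',
        cast_inDeg_listOrient_append_singleton (hperm'.nodup_iff.2 hl) hcu hl'⟩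
    · obtain ⟨l', hperm, hl'⟩ := ih hl.of_cons hodd_l c (by linear_combination hc - hcu)
      refine ⟨u :: l', hperm.cons u,
        cast_inDeg_listOrient_cons ((hperm.cons u).nodup_iff.2 hl) ?_ hl'⟩
      rw [hperm.countP_eq, hcu, hodd_u]

lemma IsOrientation.exists_listOrient_eq [Fintype V] {G : SimpleGraph V} {r : V → V → Prop}
    (hr : IsOrientation G r) (hac : AcyclicRel r) :
    ∃ l : List V, l.Nodup ∧ (∀ a, a ∈ l) ∧ listOrient G l = r := by
  classical
  have := hac.isPartialOrder_reflTransGen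
  obtain ⟨lin, hlin, hle⟩ := extend_partialOrder (Relation.ReflTransGen r)
  have := hlin
  set l := (Finset.univ.sort lin).reverse
  have hnd : l.Nodup := List.nodup_reverse.2 (Finset.sort_nodup _ _)
  have hmem : ∀ a, a ∈ l := fun a => by simp [l]
  have hpw : l.Pairwise (fun a b => lin b a) :=
    List.pairwise_reverse.2 (Finset.pairwise_sort _ _)
  exact ⟨l, hnd, hmem, (isOrientation_listOrient hnd hmem).eq_of_le_of_le hr
    (fun a b h => hpw.rel_of_listOrient h) (fun a b h => hle a b (.single h))⟩

lemma exists_eq_append_singleton_of_odd_inDeg {G : SimpleGraph V} {l : List V} {s : V}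
    (hl : l.Nodup) (hs : s ∈ l) (hodd : ∀ x ∈ l, x ≠ s → Odd (inDeg (listOrient G l) x)) :
    ∃ l₀, l = l₀ ++ [s] := by
  obtain ⟨l₀, w, rfl⟩ := (List.eq_nil_or_concat l).resolve_left (List.ne_nil_of_mem hs)
  have hw : w ∉ l₀ := ((List.nodup_concat l₀ w).1 hl).1
  rw [List.concat_eq_append] at hodd
  obtain rfl : w = s := by
    by_contra hws
    have h0 := hodd w (by simp) hws
    rw [inDeg_listOrient_append_singleton_self hw] at h0
    exact Nat.not_odd_zero h0
  exact ⟨l₀, List.concat_eq_append⟩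

theorem stmt3 [Fintype V] (G : SimpleGraph V) (h : DualCritical G) :
    ∀ v : V, ∃ r : V → V → Prop, IsOrientation G r ∧ AcyclicRel r ∧
      ∀ u : V, u ≠ v → Odd (inDeg r u) := by
  classical
  intro v
  obtain ⟨r, hr, hac, s, hodd⟩ := h
  obtain ⟨d, hnd, hmem, rfl⟩ := hr.exists_listOrient_eq hac
  obtain ⟨l, rfl⟩ := exists_eq_append_singleton_of_odd_inDeg hnd (hmem s) fun x _ => hodd x
  set c : V → ZMod 2 := fun x => 1 + if x = v then 1 else 0
  have hc : ((l ++ [s]).map c).sum = l.length := by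
    have hv : (l ++ [s]).countP (· = v) = 1 := List.count_eq_one_of_mem hnd (hmem v)
    rw [List.sum_map_add, List.sum_map_boole, hv]
    simp [add_assoc, CharTwo.add_self_eq_zero]
  have hs : s ∉ l := ((List.nodup_concat l s).1 (by simpa using hnd)).1
  obtain ⟨d', hperm, hd'⟩ := exists_perm_inDeg_listOrient_eq G s hnd
    (fun x hx => hodd x (ne_of_mem_of_not_mem hx hs)) c hc
  have hnd' := hperm.nodup_iff.2 hnd
  have hmem' : ∀ a, a ∈ d' := fun a => hperm.mem_iff.2 (hmem a)
  refine ⟨listOrient G d', isOrientation_listOrient hnd' hmem', listOrient_acyclic hnd',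
    fun u hu => ?_⟩
  simpa [c, hu, ZMod.natCast_eq_one_iff_odd] using hd' u (hmem' u)
end

section
/- Every dual-critical graph with at least one vertex has good parity; that is, the number of vertices and the number of edges have different parity. -/
variable {V : Type*}

/-! Counting edges by their heads, `|E|` is the sum of the indegrees of an orientation. An
acyclic orientation has a source, whose indegree `0` is not odd, so the source is the exceptional
vertex; every other indegree is odd, hence `|E| ≡ |V| - 1 (mod 2)`. -/

namespace IsOrientation

variable {G : SimpleGraph V} {r : V → V → Prop}

theorem image_sym2_eq_edgeSet (hr : IsOrientation G r) :
    (fun p : V × V => s(p.1, p.2)) '' {p | r p.1 p.2} = G.edgeSet := by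
  ext e
  induction e with
  | _ a b =>
    simp only [Set.mem_image, SimpleGraph.mem_edgeSet, hr.1, Prod.exists, Set.mem_ofPred_eq,
      Sym2.eq_iff]
    constructor
    · rintro ⟨x, y, hxy, ⟨rfl, rfl⟩ | ⟨rfl, rfl⟩⟩
      exacts [.inl hxy, .inr hxy]
    · rintro (hab | hba)
      exacts [⟨a, b, hab, .inl ⟨rfl, rfl⟩⟩, ⟨b, a, hba, .inr ⟨rfl, rfl⟩⟩]

theorem ncard_edgeSet (hr : IsOrientation G r) :
    G.edgeSet.ncard = {p : V × V | r p.1 p.2}.ncard := by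
  rw [← hr.image_sym2_eq_edgeSet]
  refine Set.InjOn.ncard_image fun p hp q hq hpq => ?_
  rcases Sym2.mk_eq_mk_iff.1 hpq with h | h
  · exact h
  · rw [h] at hp
    exact absurd hp (hr.2 _ _ hq)

end IsOrientation

theorem ncard_setOf_rel_eq_sum_inDeg [Fintype V] (r : V → V → Prop) :
    {p : V × V | r p.1 p.2}.ncard = ∑ v, inDeg r v := by
  classical
  simp only [inDeg, Set.ncard_eq_toFinset_card', Set.toFinset_ofPred, Finset.card_filter,
    Fintype.sum_prod_type]
  exact Finset.sum_comm

theorem AcyclicRel.exists_inDeg_eq_zero [Finite V] [Nonempty V] {r : V → V → Prop}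
    (hr : AcyclicRel r) : ∃ m, inDeg r m = 0 := by
  have : IsTrans V (Relation.TransGen r) := ⟨fun _ _ _ => .trans⟩
  have : Std.Irrefl (Relation.TransGen r) := ⟨hr⟩
  obtain ⟨m, -, hm⟩ := (Finite.wellFounded_of_trans_of_irrefl (Relation.TransGen r)).has_min
    Set.univ Set.univ_nonempty
  refine ⟨m, (Set.ncard_eq_zero (Set.toFinite _)).2 ?_⟩
  exact Set.eq_empty_of_forall_notMem fun u hu => hm u trivial (.single hu)

theorem odd_sum_add_card_of_forall_ne_odd [Fintype V] {f : V → ℕ} (s : V) (hs : Even (f s))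
    (hf : ∀ v, v ≠ s → Odd (f v)) : Odd (∑ v, f v + Fintype.card V) := by
  classical
  rw [Fintype.card_eq_sum_ones, ← Finset.sum_add_distrib,
    ← Finset.add_sum_erase _ _ (Finset.mem_univ s)]
  exact hs.add_one.add_even
    (Finset.even_sum _ fun v hv => (hf v (Finset.ne_of_mem_erase hv)).add_one)

theorem stmt4 [Fintype V] (G : SimpleGraph V) (h : DualCritical G) :
    ¬ (Fintype.card V % 2 = G.edgeSet.ncard % 2) := by
  obtain ⟨r, hr, hacyc, s, hodd⟩ := h
  have : Nonempty V := ⟨s⟩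
  obtain ⟨m, hm⟩ := hacyc.exists_inDeg_eq_zero
  obtain rfl : m = s := by
    by_contra hms
    simpa [hm] using hodd m hms
  have hparity := odd_sum_add_card_of_forall_ne_odd m (hm ▸ Even.zero) hodd
  rw [← ncard_setOf_rel_eq_sum_inDeg, ← hr.ncard_edgeSet, Nat.odd_iff] at hparity
  omega
end

section
/- A graph G with more than one vertex is dual-critical if and only if its vertex set has a partition into nonempty sets A and B such that the induced subgraphs G[A] and G[B] are dual-critical and the number of edges between A and B is odd. -/
variable {V : Type*}

/-! A nonempty vertex set admits a good ordering exactly when it can be grown from a single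
vertex by repeatedly adding a vertex with an odd number of neighbours in the current set
(`OddBuildable`); the last vertex of a good ordering gives the split `A = V \ {v}`, `B = {v}`.
For the converse, induct on how `B` is built, for all `A` at once. If the vertex `v` added last
to `B` has an even number of neighbours in `A`, the cut from `A` to `B \ {v}` is still odd:
merge these first and add `v` at the end. Otherwise `v` can join `A` first, and the cut from
`A ∪ {v}` to `B \ {v}` is odd again, because `v` has an odd number of neighbours in `B \ {v}`. -/

open Function Set SimpleGraph

section

variable {W : Type*} {G : SimpleGraph V} {H : SimpleGraph W}

theorem DualCriticalOrd.of_iso (φ : G ≃g H) (hG : DualCriticalOrd G) : DualCriticalOrd H := by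
  obtain ⟨n, e, he⟩ := hG
  refine ⟨n, e.trans φ.toEquiv, fun i hi => ?_⟩
  simpa [Iso.map_adj_iff] using he i hi

theorem dualCriticalOrd_induce_univ : DualCriticalOrd (G.induce univ) ↔ DualCriticalOrd G :=
  ⟨.of_iso G.induceUnivIso, .of_iso G.induceUnivIso.symm⟩

end

theorem Fin.ncard_setOf_of_not_last {n : ℕ} {P : Fin (n + 1) → Prop} (h : ¬ P (Fin.last n)) :
    {j | P j}.ncard = {j : Fin n | P j.castSucc}.ncard := by
  rw [← ncard_image_of_injective _ (Fin.castSucc_injective n)]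
  congr 1
  ext j
  induction j using Fin.lastCases <;> simp [h]

def IsOddOrdering (G : SimpleGraph V) {n : ℕ} (e : Fin n → V) : Prop :=
  ∀ i : Fin n, 0 < i.val → Odd {j | j < i ∧ G.Adj (e j) (e i)}.ncard

section Cut

variable (G : SimpleGraph V)

theorem cut_comm (A B : Set V) : cut G A B = cut G B A := by
  rw [cut, cut, ← ncard_image_of_injective _ Prod.swap_injective]
  congr 1
  ext ⟨x, y⟩
  simp [G.adj_comm, and_left_comm]

theorem cut_union_left [Finite V] {A₁ A₂ : Set V} (B : Set V) (h : Disjoint A₁ A₂) :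
    cut G (A₁ ∪ A₂) B = cut G A₁ B + cut G A₂ B := by
  rw [cut, cut, cut, ← ncard_union_eq]
  · congr 1
    ext
    simp [or_and_right]
  · exact Set.disjoint_left.2 fun p hp₁ hp₂ => h.ne_of_mem hp₁.1 hp₂.1 rfl

theorem cut_union_right [Finite V] (A : Set V) {B₁ B₂ : Set V} (h : Disjoint B₁ B₂) :
    cut G A (B₁ ∪ B₂) = cut G A B₁ + cut G A B₂ := by
  rw [cut_comm, cut_union_left G A h, cut_comm, cut_comm G B₂]

end Cut

section Ordering

variable {G : SimpleGraph V} {n : ℕ}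

theorem cut_range_singleton {e : Fin n → V} (he : Injective e) (v : V) :
    cut G (range e) {v} = {j | G.Adj (e j) v}.ncard := by
  have hinj : Injective fun j => (e j, v) := fun i j h => he (Prod.ext_iff.1 h).1
  rw [cut, ← ncard_image_of_injective _ hinj]
  congr 1
  ext ⟨x, y⟩
  simp only [mem_ofPred_eq, mem_range, mem_singleton_iff, mem_image, Prod.mk.injEq]
  constructor
  · rintro ⟨⟨j, rfl⟩, rfl, hadj⟩
    exact ⟨j, hadj, rfl, rfl⟩
  · rintro ⟨j, hadj, rfl, rfl⟩
    exact ⟨⟨j, rfl⟩, rfl, hadj⟩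

theorem isOddOrdering_snoc_iff {e : Fin n → V} {v : V} :
    IsOddOrdering G (Fin.snoc e v : Fin (n + 1) → V) ↔
      IsOddOrdering G e ∧ (0 < n → Odd {j | G.Adj (e j) v}.ncard) := by
  have hcast (i : Fin n) :
      {j | j < i.castSucc ∧ G.Adj ((Fin.snoc e v : Fin (n + 1) → V) j) (e i)}.ncard =
        {j | j < i ∧ G.Adj (e j) (e i)}.ncard := by
    rw [Fin.ncard_setOf_of_not_last (by simp [lt_asymm (Fin.castSucc_lt_last i)])]
    simp
  have hlast : {j | j < Fin.last n ∧ G.Adj ((Fin.snoc e v : Fin (n + 1) → V) j) v}.ncard =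
      {j | G.Adj (e j) v}.ncard := by
    rw [Fin.ncard_setOf_of_not_last (by simp)]
    simp
  simp only [IsOddOrdering, Fin.forall_fin_succ', Fin.val_castSucc, Fin.val_last,
    Fin.snoc_castSucc, Fin.snoc_last, hcast, hlast]

theorem dualCriticalOrd_induce_iff {S : Set V} :
    DualCriticalOrd (G.induce S) ↔
      ∃ n, ∃ e : Fin n → V, Injective e ∧ range e = S ∧ IsOddOrdering G e := by
  constructor
  · rintro ⟨n, e, he⟩
    refine ⟨n, Subtype.val ∘ e, Subtype.val_injective.comp e.injective, ?_,
      fun i hi => by simpa using he i hi⟩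
    rw [range_comp, e.range_eq_univ, image_univ, Subtype.range_coe]
  · rintro ⟨n, e, he, rfl, hodd⟩
    exact ⟨n, Equiv.ofInjective e he, fun i hi => by simpa using hodd i hi⟩

end Ordering

inductive OddBuildable (G : SimpleGraph V) : Set V → Prop
  | singleton (v : V) : OddBuildable G {v}
  | insert {S : Set V} {v : V} :
      OddBuildable G S → v ∉ S → Odd (cut G S {v}) → OddBuildable G (insert v S)

namespace OddBuildable

variable {G : SimpleGraph V} {S : Set V}

theorem nonempty (h : OddBuildable G S) : S.Nonempty := by
  cases h with
  | singleton v => exact singleton_nonempty v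
  | insert _ _ _ => exact insert_nonempty _ _

theorem exists_isOddOrdering (h : OddBuildable G S) :
    ∃ n, ∃ e : Fin n → V, Injective e ∧ range e = S ∧ IsOddOrdering G e := by
  induction h with
  | singleton v =>
    exact ⟨1, fun _ => v, injective_of_subsingleton _, range_const, fun i hi => by omega⟩
  | @insert S v _ hv hodd ih =>
    obtain ⟨n, e, he, rfl, hord⟩ := ih
    refine ⟨n + 1, Fin.snoc e v, Fin.snoc_injective_of_injective he hv, Fin.range_snoc e v,
      isOddOrdering_snoc_iff.2 ⟨hord, fun _ => ?_⟩⟩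
    rwa [← cut_range_singleton he]

theorem of_isOddOrdering {n : ℕ} {e : Fin (n + 1) → V} (he : Injective e)
    (hord : IsOddOrdering G e) : OddBuildable G (range e) := by
  induction n with
  | zero => simpa [range_unique] using singleton (G := G) (e 0)
  | succ n ih =>
    rw [← Fin.snoc_init_self e] at he hord ⊢
    obtain ⟨he', hlast⟩ := Fin.snoc_injective_iff.1 he
    obtain ⟨hord', hodd⟩ := isOddOrdering_snoc_iff.1 hord
    rw [Fin.range_snoc]
    exact (ih he' hord').insert hlast (by rw [cut_range_singleton he']; exact hodd n.succ_pos)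

theorem iff_dualCriticalOrd (hS : S.Nonempty) :
    OddBuildable G S ↔ DualCriticalOrd (G.induce S) := by
  rw [dualCriticalOrd_induce_iff]
  refine ⟨exists_isOddOrdering, ?_⟩
  rintro ⟨_ | n, e, he, rfl, hord⟩
  · simp at hS
  · exact of_isOddOrdering he hord

theorem dualCriticalOrd (h : OddBuildable G S) : DualCriticalOrd (G.induce S) :=
  (iff_dualCriticalOrd h.nonempty).1 h

theorem union [Finite V] {B : Set V} (hB : OddBuildable G B) :
    ∀ {A : Set V}, OddBuildable G A → Disjoint A B → Odd (cut G A B) →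
      OddBuildable G (A ∪ B) := by
  induction hB with
  | singleton v =>
    intro A hA hAv hodd
    rw [union_singleton]
    exact hA.insert (disjoint_singleton_right.1 hAv) hodd
  | @insert S v _ hvS hS ih =>
    intro A hA hAB hodd
    obtain ⟨hvA, hAS⟩ := disjoint_insert_right.1 hAB
    rw [insert_eq, cut_union_right G A (disjoint_singleton_left.2 hvS)] at hodd
    rcases Nat.even_or_odd (cut G A {v}) with hv | hv
    · have hAS' := ih hA hAS (by simpa [Nat.odd_add', hv] using hodd)
      rw [union_insert]
      refine hAS'.insert (by simp [hvA, hvS]) ?_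
      rw [cut_union_left G _ hAS]
      exact hv.add_odd hS
    · rw [union_insert, ← insert_union]
      refine ih (hA.insert hvA hv) (disjoint_insert_left.2 ⟨hvS, hAS⟩) ?_
      rw [insert_eq, cut_union_left G _ (disjoint_singleton_left.2 hvA), cut_comm G {v}]
      exact hS.add_even (by simpa [Nat.odd_add, hv] using hodd)

end OddBuildable

theorem stmt5 [Fintype V] (G : SimpleGraph V) (h : 1 < Fintype.card V) :
    DualCriticalOrd G ↔
      ∃ A B : Set V, A.Nonempty ∧ B.Nonempty ∧ Disjoint A B ∧ A ∪ B = Set.univ ∧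
        DualCriticalOrd (G.induce A) ∧ DualCriticalOrd (G.induce B) ∧
        Odd (cut G A B) := by
  constructor
  · intro hG
    obtain ⟨u, -, -⟩ := Fintype.exists_pair_of_one_lt_card h
    have hU := (OddBuildable.iff_dualCriticalOrd ⟨u, mem_univ u⟩).2
      (dualCriticalOrd_induce_univ.2 hG)
    generalize hV : (univ : Set V) = U at hU ⊢
    cases hU with
    | singleton v =>
      obtain ⟨w, hw⟩ := Fintype.exists_ne_of_one_lt_card h v
      exact absurd (hV ▸ mem_univ w : w ∈ ({v} : Set V)) hw
    | @insert S v hS hvS hodd =>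
      exact ⟨S, {v}, hS.nonempty, singleton_nonempty v, disjoint_singleton_right.2 hvS,
        union_singleton, hS.dualCriticalOrd, (OddBuildable.singleton v).dualCriticalOrd, hodd⟩
  · rintro ⟨A, B, hA, hB, hAB, hU, hGA, hGB, hcut⟩
    have hAB' := ((OddBuildable.iff_dualCriticalOrd hB).2 hGB).union
      ((OddBuildable.iff_dualCriticalOrd hA).2 hGA) hAB hcut
    rw [hU] at hAB'
    exact dualCriticalOrd_induce_univ.1 hAB'.dualCriticalOrd
end

section
/- Subdividing an edge of a multigraph by inserting a new vertex of degree 2 in its middle preserves dual-criticality in both directions. -/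
/-!
An enumeration of the vertices is the same as an injective rank function `r : V → ℕ`.
Given a good ranking of `m` with `a` below `b`, rank the new vertex just below `b`: it then sees
exactly one of its two neighbours, and `b` sees one edge to `a` fewer but one edge to the new
vertex more, while no other vertex notices the change. Conversely, in a good ranking of the
subdivision with `a` below `b`, parity at the new vertex forces it between `a` and `b` (or to be
lowest, and then `a` is the lowest old vertex), so deleting it leaves a good ranking of `m`.
-/

variable {V : Type*}

/-- Dual-criticality of a loopless multigraph given by an edge multiplicity function:
there is an enumeration of all vertices such that every vertex except the first is joined
to its predecessors by an odd number of edges (counted with multiplicity). -/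
def MDualCritical (m : V → V → ℕ) : Prop :=
  ∃ (n : ℕ) (e : Fin n ≃ V), ∀ i : Fin n, 0 < i.val →
    Odd (∑ j ∈ Finset.Iio i, m (e j) (e i))

/-- The multigraph obtained from `m` by subdividing one of the edges between `a` and `b`
with a new vertex (`none`) of degree 2. -/
def subdiv [DecidableEq V] (m : V → V → ℕ) (a b : V) : Option V → Option V → ℕ
  | some u, some v => if (u = a ∧ v = b) ∨ (u = b ∧ v = a) then m u v - 1 else m u v
  | some u, none => if u = a ∨ u = b then 1 else 0
  | none, some v => if v = a ∨ v = b then 1 else 0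
  | none, none => 0

open Finset

def IsGoodRanking [Fintype V] (m : V → V → ℕ) (r : V → ℕ) : Prop :=
  Function.Injective r ∧
    ∀ v, (∃ u, r u < r v) → Odd (∑ u ∈ univ.filter (fun u => r u < r v), m u v)

theorem MDualCritical.finite {m : V → V → ℕ} (h : MDualCritical m) : Finite V :=
  let ⟨_, e, _⟩ := h
  .of_equiv _ e

theorem mDualCritical_iff_exists_isGoodRanking [Fintype V] (m : V → V → ℕ) :
    MDualCritical m ↔ ∃ r, IsGoodRanking m r := by
  constructor
  · rintro ⟨n, e, he⟩
    refine ⟨fun v => e.symm v, Fin.val_injective.comp e.symm.injective, fun v ⟨u, hu⟩ => ?_⟩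
    have hpos : 0 < (e.symm v).val := (Nat.zero_le _).trans_lt hu
    convert he (e.symm v) hpos using 1
    exact sum_equiv e.symm (fun u => by simp) (fun u _ => by simp)
  · rintro ⟨r, hr, hodd⟩
    let _ : LinearOrder V := LinearOrder.lift' r hr
    let e := Fintype.orderIsoFinOfCardEq V rfl
    refine ⟨_, e.toEquiv, fun i hi => ?_⟩
    have hlt : ∀ j i, j < i ↔ r (e j) < r (e i) := fun j i => e.lt_iff_lt.symm
    have := hodd (e i) ⟨e ⟨0, i.pos⟩, (hlt _ _).1 (Fin.lt_def.2 hi)⟩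
    convert this using 1
    exact sum_equiv e.toEquiv (fun j => by simp [hlt]) (fun _ _ => rfl)

theorem sum_filter_rank_lt_option [Fintype V] (r : Option V → ℕ) (f : Option V → ℕ)
    (x : Option V) :
    ∑ y ∈ univ.filter (fun y => r y < r x), f y =
      (if r none < r x then f none else 0) +
        ∑ u ∈ univ.filter (fun u => r (some u) < r x), f (some u) := by
  simp only [sum_filter, Fintype.sum_option]

section Subdivision

variable [DecidableEq V] {m : V → V → ℕ} {a b : V}

theorem subdiv_comm (m : V → V → ℕ) (a b : V) : subdiv m a b = subdiv m b a := by
  funext x y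
  cases x <;> cases y <;> simp [subdiv, or_comm]

theorem sum_subdiv_some_none (hab : a ≠ b) (S : Finset V) :
    ∑ u ∈ S, subdiv m a b (some u) none =
      (if a ∈ S then 1 else 0) + (if b ∈ S then 1 else 0) := by
  have hterm : ∀ u, subdiv m a b (some u) none =
      (if u = a then 1 else 0) + (if u = b then 1 else 0) := fun u => by
    by_cases hua : u = a <;> by_cases hub : u = b <;> simp_all [subdiv]
  simp only [hterm, sum_add_distrib, sum_ite_eq']

theorem sum_subdiv_some_some_add (hab : a ≠ b) (hedge : 1 ≤ m a b) (S : Finset V) (v : V)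
    (hbS : v = a → b ∉ S) :
    ∑ u ∈ S, subdiv m a b (some u) (some v) + (if v = b ∧ a ∈ S then 1 else 0) =
      ∑ u ∈ S, m u v := by
  by_cases h : v = b ∧ a ∈ S
  · obtain ⟨rfl, ha⟩ := h
    have hrest : ∀ u ∈ S.erase a, subdiv m a v (some u) (some v) = m u v := fun u hu => by
      simp [subdiv, (mem_erase.1 hu).1, hab.symm]
    rw [← add_sum_erase _ _ ha, ← add_sum_erase _ _ ha, sum_congr rfl hrest,
      if_pos ⟨rfl, ha⟩]
    simp only [subdiv, and_self, true_or, if_true]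
    omega
  · have hterm : ∀ u ∈ S, subdiv m a b (some u) (some v) = m u v := fun u hu => by
      simp only [subdiv]
      rw [if_neg]
      rintro (⟨rfl, rfl⟩ | ⟨rfl, rfl⟩)
      exacts [h ⟨rfl, hu⟩, hbS rfl hu]
    rw [sum_congr rfl hterm, if_neg h, add_zero]

/-- `hnone`: the new vertex is a lower neighbour of `v` exactly when `v = b` and `a` is below `b`,
so it makes up for the edge `ab` that the subdivision removes. -/
theorem sum_filter_rank_lt_subdiv_some [Fintype V] (hab : a ≠ b) (hedge : 1 ≤ m a b)
    (r : Option V → ℕ) (v : V) (hba : v = a → ¬ r (some b) < r (some v))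
    (hnone : r none < r (some v) ∧ (v = a ∨ v = b) ↔ v = b ∧ r (some a) < r (some v)) :
    ∑ y ∈ univ.filter (fun y => r y < r (some v)), subdiv m a b y (some v) =
      ∑ u ∈ univ.filter (fun u => r (some u) < r (some v)), m u v := by
  rw [sum_filter_rank_lt_option, ← sum_subdiv_some_some_add hab hedge _ v (by simpa using hba)]
  simp only [mem_filter, mem_univ, true_and]
  rw [add_comm]
  congr 1
  simp only [← hnone, ite_and, subdiv]

theorem IsGoodRanking.to_subdiv [Fintype V] {r : V → ℕ} (h : IsGoodRanking m r) (hab : a ≠ b)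
    (hedge : 1 ≤ m a b) (hlt : r a < r b) :
    IsGoodRanking (subdiv m a b) (fun x => x.elim (2 * r b) (fun v => 2 * r v + 1)) := by
  refine ⟨?_, ?_⟩
  · rintro (_ | u) (_ | v) huv <;> simp only [Option.elim, Option.some.injEq] at huv ⊢
    · omega
    · omega
    · exact h.1 (by omega)
  rintro (_ | v) ⟨y, hy⟩
  · rw [sum_filter_rank_lt_option, sum_subdiv_some_none hab, if_neg (lt_irrefl _),
      if_pos (mem_filter.2 ⟨mem_univ a, by dsimp only [Option.elim]; omega⟩),
      if_neg (fun hb => by simp only [mem_filter] at hb; dsimp only [Option.elim] at hb; omega)]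
    exact odd_one
  · have hv : ∃ u, r u < r v := by
      rcases y with _ | u
      · by_cases hvb : v = b
        · exact ⟨a, hvb ▸ hlt⟩
        · dsimp only [Option.elim] at hy
          exact ⟨b, lt_of_le_of_ne (by omega) (h.1.ne (Ne.symm hvb))⟩
      · exact ⟨u, by simpa using hy⟩
    have hnone :
        2 * r b < 2 * r v + 1 ∧ (v = a ∨ v = b) ↔ v = b ∧ 2 * r a + 1 < 2 * r v + 1 := by
      constructor
      · rintro ⟨hbv, rfl | rfl⟩
        · omega
        · exact ⟨rfl, by omega⟩
      · rintro ⟨rfl, -⟩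
        exact ⟨by omega, Or.inr rfl⟩
    have hba : v = a → ¬ 2 * r b + 1 < 2 * r v + 1 := by rintro rfl; omega
    rw [sum_filter_rank_lt_subdiv_some hab hedge _ v hba hnone]
    convert h.2 v hv using 2
    ext u
    simp

section OfSubdiv

variable [Fintype V] {r : Option V → ℕ} (h : IsGoodRanking (subdiv m a b) r) (hab : a ≠ b)
  (hlt : r (some a) < r (some b))
include h hab hlt

theorem IsGoodRanking.lt_none_lt_of_subdiv (hnone : ∃ y, r y < r none) :
    r (some a) < r none ∧ r none < r (some b) := by
  have hodd := h.2 none hnone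
  rw [sum_filter_rank_lt_option, if_neg (lt_irrefl _), zero_add, sum_subdiv_some_none hab] at hodd
  simp only [mem_filter, mem_univ, true_and] at hodd
  by_cases ha : r (some a) < r none <;> by_cases hb : r (some b) < r none
  · simp [ha, hb, Nat.odd_iff] at hodd
  · exact ⟨ha, lt_of_le_of_ne (not_lt.1 hb) (h.1.ne (by simp))⟩
  · exact absurd (hlt.trans hb) ha
  · simp [ha, hb] at hodd

/-- If the new vertex comes first, the lowest vertex of `V` is joined only to it, so it is `a`. -/
theorem IsGoodRanking.rank_a_le_of_subdiv (hnone : ∀ y, ¬ r y < r none) (u : V) :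
    r (some a) ≤ r (some u) := by
  obtain ⟨u₀, -, hu₀⟩ := exists_min_image univ (r ∘ some) ⟨a, mem_univ a⟩
  have hpos : r none < r (some u₀) := lt_of_le_of_ne (not_lt.1 (hnone _)) (h.1.ne (by simp))
  have hodd := h.2 (some u₀) ⟨none, hpos⟩
  have hbelow : univ.filter (fun u => r (some u) < r (some u₀)) = ∅ :=
    filter_false_of_mem fun u _ => not_lt.2 (hu₀ u (mem_univ u))
  rw [sum_filter_rank_lt_option, if_pos hpos, hbelow, sum_empty, add_zero] at hodd
  have hu₀a : u₀ = a := by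
    rcases eq_or_ne u₀ a with hua | hua
    · exact hua
    · rcases eq_or_ne u₀ b with rfl | hub
      · exact absurd (hu₀ a (mem_univ a)) (not_le.2 hlt)
      · simp [subdiv, hua, hub] at hodd
  exact hu₀a ▸ hu₀ u (mem_univ u)

theorem IsGoodRanking.of_subdiv (hedge : 1 ≤ m a b) : IsGoodRanking m (r ∘ some) := by
  refine ⟨h.1.comp (Option.some_injective V), fun v ⟨u, hu⟩ => ?_⟩
  have hodd := h.2 (some v) ⟨some u, hu⟩
  have hnone : r none < r (some v) ∧ (v = a ∨ v = b) ↔ v = b ∧ r (some a) < r (some v) := by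
    constructor
    · rintro ⟨hn, rfl | rfl⟩
      · by_cases hN : ∃ y, r y < r none
        · exact absurd hn (h.lt_none_lt_of_subdiv hab hlt hN).1.asymm
        · exact absurd hu (not_lt.2 (h.rank_a_le_of_subdiv hab hlt (not_exists.1 hN) u))
      · exact ⟨rfl, hlt⟩
    · rintro ⟨rfl, -⟩
      refine ⟨?_, Or.inr rfl⟩
      by_cases hN : ∃ y, r y < r none
      · exact (h.lt_none_lt_of_subdiv hab hlt hN).2
      · exact lt_of_le_of_ne (not_lt.1 (not_exists.1 hN _)) (h.1.ne (by simp))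
  rwa [sum_filter_rank_lt_subdiv_some hab hedge r v (by rintro rfl; exact hlt.asymm) hnone] at hodd

end OfSubdiv

end Subdivision

theorem stmt8_general [DecidableEq V] (m : V → V → ℕ)
    (hsymm : ∀ u v, m u v = m v u)
    (a b : V) (hab : a ≠ b) (hedge : 1 ≤ m a b) :
    MDualCritical m ↔ MDualCritical (subdiv m a b) := by
  have hedge' : 1 ≤ m b a := hsymm a b ▸ hedge
  constructor
  · intro hm
    have := hm.finite
    have := Fintype.ofFinite V
    obtain ⟨r, hr⟩ := (mDualCritical_iff_exists_isGoodRanking m).1 hm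
    rw [mDualCritical_iff_exists_isGoodRanking]
    rcases lt_or_gt_of_ne (hr.1.ne hab) with hlt | hlt
    · exact ⟨_, hr.to_subdiv hab hedge hlt⟩
    · exact subdiv_comm m a b ▸ ⟨_, hr.to_subdiv hab.symm hedge' hlt⟩
  · intro hm
    have := hm.finite
    have : Finite V := .of_injective some (Option.some_injective V)
    have := Fintype.ofFinite V
    obtain ⟨r, hr⟩ := (mDualCritical_iff_exists_isGoodRanking _).1 hm
    rw [mDualCritical_iff_exists_isGoodRanking]
    rcases lt_or_gt_of_ne (hr.1.ne (Option.some_injective V |>.ne hab)) with hlt | hlt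
    · exact ⟨_, hr.of_subdiv hab hlt hedge⟩
    · rw [subdiv_comm] at hr
      exact ⟨_, hr.of_subdiv hab.symm hlt hedge'⟩

theorem stmt8 [DecidableEq V] (m : V → V → ℕ)
    (hsymm : ∀ u v, m u v = m v u) (hloopless : ∀ v, m v v = 0)
    (a b : V) (hab : a ≠ b) (hedge : 1 ≤ m a b) :
    MDualCritical m ↔ MDualCritical (subdiv m a b) :=
  stmt8_general m hsymm a b hab hedge
end

section
/- A connected graph G satisfies maxdc(G) = 1 (i.e., G is 1-dual-critical but not 2-dual-critical) if and only if G is Eulerian (every vertex has even degree). -/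
variable {V : Type*}

/-!
The classes of a good partition with at least two classes can be read backwards: the last class
`A` is joined to its complement by an odd number of edges. Conversely an odd cut between `Aᶜ` and
`A` is itself a good 2-partition, and the whole vertex set is a good 1-partition. Hence
`maxdc G = 1` exactly when every cut `(Aᶜ, A)` is even. Counting the darts ending in `A` gives
`cut Aᶜ A + cut A A = ∑_{v ∈ A} deg v`, where `cut A A` is even because every edge inside `A` is
counted in both directions; so all cuts are even iff all degrees are (take `A = {v}`).
-/

open Finset

section Cut

variable (G : SimpleGraph V)

lemma cut_eq_card [Fintype V] [DecidableRel G.Adj] (A B : Set V) [DecidablePred (· ∈ A)]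
    [DecidablePred (· ∈ B)] :
    cut G A B = #{p : V × V | p.1 ∈ A ∧ p.2 ∈ B ∧ G.Adj p.1 p.2} := by
  rw [cut, ← Set.ncard_coe_finset]
  simp

lemma even_cut_self [Finite V] (A : Set V) : Even (cut G A A) := by
  classical
  have := Fintype.ofFinite V
  let H := (G.induce A).spanningCoe
  have hH : cut G A A = #{p : V × V | H.Adj p.1 p.2} := by
    rw [cut_eq_card]
    congr 1
    ext ⟨a, b⟩
    simp [H, and_comm, and_left_comm]
  exact hH ▸ H.two_mul_card_edgeFinset ▸ even_two_mul _

lemma cut_univ_eq_sum_degree [Fintype V] [DecidableRel G.Adj] (A : Set V) [DecidablePred (· ∈ A)] :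
    cut G Set.univ A = ∑ v with v ∈ A, G.degree v := by
  rw [cut_eq_card, card_filter, Fintype.sum_prod_type, sum_comm, sum_filter]
  refine sum_congr rfl fun v _ => ?_
  by_cases hv : v ∈ A
  · rw [if_pos hv, ← G.card_neighborFinset_eq_degree, G.neighborFinset_eq_filter, card_filter]
    simp [hv, G.adj_comm]
  · simp [hv]

lemma cut_compl_add_cut_self [Finite V] (A : Set V) :
    cut G Aᶜ A + cut G A A = cut G Set.univ A := by
  rw [cut, cut, cut, ← Set.ncard_union_eq _ (Set.toFinite _) (Set.toFinite _)]
  · congr 1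
    ext p
    simp only [Set.mem_union, Set.mem_ofPred_eq, Set.mem_compl_iff, Set.mem_univ, true_and]
    tauto
  · exact Set.disjoint_left.mpr fun p h1 h2 => h1.1 h2.1

lemma SimpleGraph.ncard_neighborSet_eq_degree [Fintype V] [DecidableRel G.Adj] (v : V) :
    (G.neighborSet v).ncard = G.degree v := by
  rw [← G.card_neighborFinset_eq_degree, ← Set.ncard_coe_finset, G.coe_neighborFinset]

lemma cut_singleton_singleton_self (v : V) : cut G {v} {v} = 0 := by
  rw [cut, ← Set.ncard_empty (V × V)]
  congr 1
  ext ⟨a, b⟩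
  simp only [Set.mem_singleton_iff, Set.mem_ofPred_eq, Set.mem_empty_iff_false, iff_false]
  rintro ⟨rfl, rfl, h⟩
  exact G.loopless.irrefl _ h

lemma cut_compl_singleton [Finite V] (v : V) : cut G {v}ᶜ {v} = (G.neighborSet v).ncard := by
  classical
  have := Fintype.ofFinite V
  have h := cut_compl_add_cut_self G {v}
  rw [cut_univ_eq_sum_degree, cut_singleton_singleton_self] at h
  simpa [G.ncard_neighborSet_eq_degree, sum_filter] using h

theorem forall_even_degree_iff_forall_even_cut [Finite V] :
    (∀ v, Even (G.neighborSet v).ncard) ↔ ∀ A : Set V, Even (cut G Aᶜ A) := by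
  classical
  have := Fintype.ofFinite V
  refine ⟨fun h A => ?_, fun h v => cut_compl_singleton G v ▸ h {v}⟩
  have hcut : Even (cut G Aᶜ A + cut G A A) := by
    rw [cut_compl_add_cut_self, cut_univ_eq_sum_degree]
    exact even_sum _ fun v _ => G.ncard_neighborSet_eq_degree v ▸ h v
  exact (Nat.even_add.mp hcut).mpr (even_cut_self G A)

end Cut

section DualCritical

variable (G : SimpleGraph V)

lemma kDualCritical_one [Nonempty V] : KDualCritical G 1 :=
  ⟨fun _ => Set.univ, fun _ => Set.univ_nonempty, fun i j hij => absurd (Subsingleton.elim i j) hij,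
    Set.iUnion_const _, fun i hi => absurd hi (by omega)⟩

lemma KDualCritical.le_card [Finite V] {G : SimpleGraph V} {k : ℕ} (h : KDualCritical G k) :
    k ≤ Nat.card V := by
  obtain ⟨P, hne, hdisj, -, -⟩ := h
  choose f hf using hne
  have hf_inj : Function.Injective f := fun i j hij => by
    by_contra hne
    exact Set.disjoint_left.mp (hdisj hne) (hf i) (hij ▸ hf j)
  simpa using Nat.card_le_card_of_injective f hf_inj

lemma bddAbove_kDualCritical [Finite V] : BddAbove {k | KDualCritical G k} :=
  ⟨Nat.card V, fun _ => KDualCritical.le_card⟩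

lemma nonempty_of_odd_cut {A B : Set V} (h : Odd (cut G A B)) : A.Nonempty ∧ B.Nonempty := by
  obtain ⟨⟨a, b⟩, ha, hb, -⟩ := Set.nonempty_of_ncard_ne_zero h.pos.ne'
  exact ⟨⟨a, ha⟩, ⟨b, hb⟩⟩

lemma kDualCritical_two_of_odd_cut {A : Set V} (h : Odd (cut G Aᶜ A)) : KDualCritical G 2 := by
  obtain ⟨hAc, hA⟩ := nonempty_of_odd_cut G h
  refine ⟨![Aᶜ, A], ?_, ?_, ?_, ?_⟩
  · intro i
    fin_cases i
    exacts [hAc, hA]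
  · intro i j hij
    fin_cases i <;> fin_cases j <;> simp_all [Function.onFun, disjoint_compl_left, disjoint_compl_right]
  · refine Set.iUnion_eq_univ_iff.mpr fun x => ?_
    by_cases hx : x ∈ A
    exacts [⟨1, hx⟩, ⟨0, hx⟩]
  · intro i hi
    obtain rfl : i = 1 := by omega
    have hlt : {j : Fin 2 | j < 1} = {0} := by ext j; fin_cases j <;> simp
    simpa [hlt] using h

lemma GoodPartition.biUnion_lt_last {n : ℕ} {P : Fin (n + 1) → Set V} (h : GoodPartition G P) :
    ⋃ j ∈ {j | j < Fin.last n}, P j = (P (Fin.last n))ᶜ := by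
  obtain ⟨-, hdisj, hcover, -⟩ := h
  ext x
  simp only [Set.mem_iUnion, Set.mem_ofPred_eq, Set.mem_compl_iff, exists_prop]
  constructor
  · rintro ⟨j, hj, hx⟩ hlast
    exact Set.disjoint_left.mp (hdisj hj.ne) hx hlast
  · intro hx
    obtain ⟨j, hj⟩ := Set.mem_iUnion.mp (hcover ▸ Set.mem_univ x)
    exact ⟨j, Fin.lt_last_iff_ne_last.mpr (by rintro rfl; exact hx hj), hj⟩

lemma KDualCritical.exists_odd_cut {G : SimpleGraph V} {n : ℕ} (h : KDualCritical G (n + 2)) :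
    ∃ A : Set V, Odd (cut G Aᶜ A) := by
  obtain ⟨P, hP⟩ := h
  refine ⟨P (Fin.last (n + 1)), ?_⟩
  rw [← hP.biUnion_lt_last]
  exact hP.2.2.2 _ (by simp)

end DualCritical

section Maxdc

variable (G : SimpleGraph V) [Finite V]

lemma one_le_maxdc [Nonempty V] : 1 ≤ maxdc G :=
  le_csSup (bddAbove_kDualCritical G) (kDualCritical_one G)

lemma two_le_maxdc_iff : 2 ≤ maxdc G ↔ ∃ A : Set V, Odd (cut G Aᶜ A) := by
  refine ⟨fun h => ?_, fun ⟨A, hA⟩ =>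
    le_csSup (bddAbove_kDualCritical G) (kDualCritical_two_of_odd_cut G hA)⟩
  have hne : {k | KDualCritical G k}.Nonempty :=
    Set.nonempty_iff_ne_empty.mpr fun hempty => by simp [maxdc, hempty] at h
  obtain ⟨n, hn⟩ := Nat.exists_eq_add_of_le' h
  have hmem : KDualCritical G (maxdc G) := Nat.sSup_mem hne (bddAbove_kDualCritical G)
  exact (hn ▸ hmem).exists_odd_cut

end Maxdc

theorem stmt15 [Fintype V] (G : SimpleGraph V) (hconn : G.Connected) :
    maxdc G = 1 ↔ ∀ v : V, Even (G.neighborSet v).ncard := by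
  have := hconn.nonempty
  have hone := one_le_maxdc G
  rw [forall_even_degree_iff_forall_even_cut]
  simp only [← Nat.not_odd_iff_even, ← not_exists, ← two_le_maxdc_iff]
  omega
end
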